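/- Suppose α ∈ ℝ² and μ > 2 are such that |⟨α, k⟩| ≥ c/|k|^{μ−1} for all nonzero k ∈ ℤ², for some c > 0. Then there exists c' > 0 such that for all mean-zero f ∈ H¹(𝕋²): ‖∇f‖_{L²}^{1−1/μ}·‖⟨∇f, α⟩‖_{L²}^{1/μ} ≥ c'·‖f‖_{L²}. -/

import Mathlib

open Real

/- We model a mean-zero function `f ∈ H¹(𝕋²)` on the flat torus `𝕋² = ℝ²/(2πℤ)²`
by its Fourier coefficients `a : ℤ × ℤ → ℂ`, `f = Σ aₖ e^{ik·x}`, `a₀ = 0`.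
By Parseval, `‖f‖²_{L²} = (2π)² Σ |aₖ|²`, `‖∇f‖²_{L²} = (2π)² Σ |k|²|aₖ|²` and
`‖⟨∇f,α⟩‖²_{L²} = (2π)² Σ ⟨k,α⟩²|aₖ|²`.  All inequalities below are homogeneous
in the number of `L²`-norm factors, so the constant `(2π)²` is harmlessly dropped. -/

/-- `‖f‖²_{L²(𝕋²)}` (modulo the factor `(2π)²`). -/
noncomputable def normSq (a : ℤ × ℤ → ℂ) : ℝ := ∑' k : ℤ × ℤ, ‖a k‖ ^ 2

/-- `‖∇f‖²_{L²(𝕋²)}` (modulo the factor `(2π)²`). -/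
noncomputable def gradSq (a : ℤ × ℤ → ℂ) : ℝ :=
  ∑' k : ℤ × ℤ, (((k.1 : ℝ)) ^ 2 + ((k.2 : ℝ)) ^ 2) * ‖a k‖ ^ 2

/-- `‖⟨∇f, α⟩‖²_{L²(𝕋²)}` (modulo the factor `(2π)²`). -/
noncomputable def dirSq (α : ℝ × ℝ) (a : ℤ × ℤ → ℂ) : ℝ :=
  ∑' k : ℤ × ℤ, (α.1 * k.1 + α.2 * k.2) ^ 2 * ‖a k‖ ^ 2

/-- `f ∈ H¹(𝕋²)`. -/
def IsH1 (a : ℤ × ℤ → ℂ) : Prop :=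
  Summable (fun k : ℤ × ℤ => ‖a k‖ ^ 2) ∧
  Summable (fun k : ℤ × ℤ => (((k.1 : ℝ)) ^ 2 + ((k.2 : ℝ)) ^ 2) * ‖a k‖ ^ 2)

/- The inequality is an interpolation inequality on the Fourier side. With weights `wₖ = |aₖ|²`,
Hölder's inequality with exponents `1/(1-θ)` and `1/θ`, `θ = 1/μ`, gives
`Σ |k|^{2(1-θ)} ⟨α,k⟩^{2θ} wₖ ≤ (Σ |k|² wₖ)^{1-θ} (Σ ⟨α,k⟩² wₖ)^θ`, and the Diophantine condition
`|⟨α,k⟩| ≥ c/|k|^{μ-1}` makes every factor `|k|^{1-θ} |⟨α,k⟩|^θ` at least `c^θ`, because the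
exponent `μ - 1` is exactly what cancels `|k|^{1-θ}`. Since `a₀ = 0`, the left side is then at
least `c^{2θ} Σ wₖ`. -/

theorem summable_and_tsum_rpow_mul_rpow_mul_le {ι : Type*} {θ : ℝ} (hθ₀ : 0 < θ) (hθ₁ : θ < 1)
    {t d w : ι → ℝ} (ht : ∀ i, 0 ≤ t i) (hd : ∀ i, 0 ≤ d i) (hw : ∀ i, 0 ≤ w i)
    (hT : Summable fun i => t i * w i) (hD : Summable fun i => d i * w i) :
    (Summable fun i => t i ^ (1 - θ) * d i ^ θ * w i) ∧
      ∑' i, t i ^ (1 - θ) * d i ^ θ * w i ≤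
        (∑' i, t i * w i) ^ (1 - θ) * (∑' i, d i * w i) ^ θ := by
  have hpq := Real.HolderConjugate.one_sub_inv_inv hθ₀ hθ₁
  have htw i : 0 ≤ t i * w i := mul_nonneg (ht i) (hw i)
  have hdw i : 0 ≤ d i * w i := mul_nonneg (hd i) (hw i)
  have hsplit i : t i ^ (1 - θ) * d i ^ θ * w i =
      (t i * w i) ^ (1 - θ) * (d i * w i) ^ θ := by
    rw [mul_rpow (ht i) (hw i), mul_rpow (hd i) (hw i)]
    calc t i ^ (1 - θ) * d i ^ θ * w i
        = t i ^ (1 - θ) * d i ^ θ * w i ^ ((1 - θ) + θ) := by rw [sub_add_cancel, rpow_one]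
      _ = _ := by rw [rpow_add' (hw i) (by norm_num)]; ring
  simp only [hsplit]
  have key := summable_and_inner_le_Lp_mul_Lq_tsum_of_nonneg hpq
    (fun i => rpow_nonneg (htw i) (1 - θ)) (fun i => rpow_nonneg (hdw i) θ)
    (by simpa only [rpow_rpow_inv (htw _) (sub_pos.2 hθ₁).ne'] using hT)
    (by simpa only [rpow_rpow_inv (hdw _) hθ₀.ne'] using hD)
  simpa only [rpow_rpow_inv (htw _) (sub_pos.2 hθ₁).ne', rpow_rpow_inv (hdw _) hθ₀.ne', one_div,
    inv_inv] using key

theorem rpow_inv_le_rpow_mul_rpow_of_div_rpow_le {c r s μ : ℝ} (hc : 0 ≤ c) (hr : 0 < r)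
    (hμ : 0 < μ) (h : c / r ^ (μ - 1) ≤ s) :
    c ^ μ⁻¹ ≤ r ^ (1 - μ⁻¹) * s ^ μ⁻¹ := by
  have hr' : 0 < r ^ (1 - μ⁻¹) := rpow_pos_of_pos hr _
  have hexp : (μ - 1) * μ⁻¹ = 1 - μ⁻¹ := by field_simp
  calc c ^ μ⁻¹ = r ^ (1 - μ⁻¹) * (c / r ^ (μ - 1)) ^ μ⁻¹ := by
        rw [div_rpow hc (rpow_nonneg hr.le _), ← rpow_mul hr.le, hexp, mul_div_cancel₀ _ hr'.ne']
    _ ≤ r ^ (1 - μ⁻¹) * s ^ μ⁻¹ := by gcongr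

theorem sq_rpow_inv_le_of_div_rpow_le_abs {c r x μ : ℝ} (hc : 0 ≤ c) (hr : 0 < r) (hμ : 0 < μ)
    (h : c / r ^ (μ - 1) ≤ |x|) :
    (c ^ μ⁻¹) ^ 2 ≤ (r ^ 2) ^ (1 - μ⁻¹) * (x ^ 2) ^ μ⁻¹ := by
  have hbound := rpow_inv_le_rpow_mul_rpow_of_div_rpow_le hc hr hμ h
  calc (c ^ μ⁻¹) ^ 2 ≤ (r ^ (1 - μ⁻¹) * |x| ^ μ⁻¹) ^ 2 := by gcongr
    _ = (r ^ 2) ^ (1 - μ⁻¹) * (x ^ 2) ^ μ⁻¹ := by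
      rw [mul_pow, rpow_pow_comm hr.le, rpow_pow_comm (abs_nonneg x), sq_abs]

theorem sq_add_sq_pos_of_ne_zero {k : ℤ × ℤ} (hk : k ≠ 0) : 0 < (k.1 : ℝ) ^ 2 + (k.2 : ℝ) ^ 2 := by
  obtain h | h : (k.1 : ℝ) ≠ 0 ∨ (k.2 : ℝ) ≠ 0 := by
    simpa [Prod.ext_iff, ← not_and_or] using hk
  exacts [by positivity, by positivity]

theorem sq_rpow_inv_le_of_lattice_point {α₁ α₂ c μ : ℝ} (hc : 0 ≤ c) (hμ : 0 < μ) {k : ℤ × ℤ}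
    (hk : k ≠ 0) (h : |α₁ * k.1 + α₂ * k.2| ≥ c / √((k.1 : ℝ) ^ 2 + (k.2 : ℝ) ^ 2) ^ (μ - 1)) :
    (c ^ μ⁻¹) ^ 2 ≤
      ((k.1 : ℝ) ^ 2 + (k.2 : ℝ) ^ 2) ^ (1 - μ⁻¹) * ((α₁ * k.1 + α₂ * k.2) ^ 2) ^ μ⁻¹ := by
  have ht := sq_add_sq_pos_of_ne_zero hk
  simpa only [sq_sqrt ht.le] using sq_rpow_inv_le_of_div_rpow_le_abs hc (sqrt_pos.2 ht) hμ h

theorem mul_sqrt_le_sqrt_rpow_mul_sqrt_rpow {C N G D θ : ℝ} (hC : 0 ≤ C) (hN : 0 ≤ N)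
    (hG : 0 ≤ G) (hD : 0 ≤ D) (h : C ^ 2 * N ≤ G ^ (1 - θ) * D ^ θ) :
    C * √N ≤ √G ^ (1 - θ) * √D ^ θ := by
  refine (pow_le_pow_iff_left₀ (by positivity) (by positivity) two_ne_zero).1 ?_
  rwa [mul_pow, mul_pow, sq_sqrt hN, rpow_pow_comm (sqrt_nonneg G),
    rpow_pow_comm (sqrt_nonneg D), sq_sqrt hG, sq_sqrt hD]

theorem IsH1.summable_dirSq {a : ℤ × ℤ → ℂ} (ha : IsH1 a) (α : ℝ × ℝ) :
    Summable fun k : ℤ × ℤ => (α.1 * k.1 + α.2 * k.2) ^ 2 * ‖a k‖ ^ 2 := by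
  refine (ha.2.mul_left (α.1 ^ 2 + α.2 ^ 2)).of_nonneg_of_le (fun k => by positivity) fun k => ?_
  rw [← mul_assoc]
  gcongr
  nlinarith [sq_nonneg (α.1 * k.2 - α.2 * k.1)]

/-- If `μ > 2` and `|⟨α,k⟩| ≥ c/|k|^{μ-1}` for all nonzero `k ∈ ℤ²`, then
`‖∇f‖^{1-1/μ} ⬝ ‖⟨∇f,α⟩‖^{1/μ} ≥ c' ‖f‖` for all mean-zero `f ∈ H¹(𝕋²)`. -/
theorem stmt_15 (α₁ α₂ μ : ℝ) (hμ : 2 < μ) (c : ℝ) (hc : 0 < c)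
    (hα : ∀ k₁ k₂ : ℤ, ¬ (k₁ = 0 ∧ k₂ = 0) →
      |α₁ * k₁ + α₂ * k₂| ≥ c / Real.sqrt ((k₁ : ℝ) ^ 2 + (k₂ : ℝ) ^ 2) ^ (μ - 1)) :
    ∃ c' > (0 : ℝ), ∀ a : ℤ × ℤ → ℂ, IsH1 a → a 0 = 0 →
      Real.sqrt (gradSq a) ^ (1 - 1 / μ) * Real.sqrt (dirSq (α₁, α₂) a) ^ (1 / μ)
        ≥ c' * Real.sqrt (normSq a) := by
  have hμ₀ : 0 < μ := by linarith
  refine ⟨c ^ μ⁻¹, rpow_pos_of_pos hc _, fun a ha ha₀ => ?_⟩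
  have hpointwise (k : ℤ × ℤ) : (c ^ μ⁻¹) ^ 2 * ‖a k‖ ^ 2 ≤
      ((k.1 : ℝ) ^ 2 + (k.2 : ℝ) ^ 2) ^ (1 - μ⁻¹) * ((α₁ * k.1 + α₂ * k.2) ^ 2) ^ μ⁻¹ *
        ‖a k‖ ^ 2 := by
    rcases eq_or_ne k 0 with rfl | hk
    · simp [ha₀]
    gcongr
    exact sq_rpow_inv_le_of_lattice_point hc.le hμ₀ hk (hα k.1 k.2 fun h => hk (Prod.ext h.1 h.2))
  obtain ⟨hsum, hholder⟩ := summable_and_tsum_rpow_mul_rpow_mul_le (inv_pos.2 hμ₀)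
    (inv_lt_one_of_one_lt₀ (by linarith)) (fun _ => by positivity) (fun _ => by positivity)
    (fun _ => by positivity) ha.2 (ha.summable_dirSq (α₁, α₂))
  have hinterp : (c ^ μ⁻¹) ^ 2 * normSq a ≤ gradSq a ^ (1 - μ⁻¹) * dirSq (α₁, α₂) a ^ μ⁻¹ :=
    calc (c ^ μ⁻¹) ^ 2 * normSq a = ∑' k, (c ^ μ⁻¹) ^ 2 * ‖a k‖ ^ 2 := tsum_mul_left.symm
      _ ≤ _ := (ha.1.mul_left _).tsum_le_tsum hpointwise hsum
      _ ≤ _ := hholder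
  rw [ge_iff_le, one_div]
  exact mul_sqrt_le_sqrt_rpow_mul_sqrt_rpow (by positivity)
    (tsum_nonneg fun _ => by positivity) (tsum_nonneg fun _ => by positivity)
    (tsum_nonneg fun _ => by positivity) hinterp
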